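/- arXiv:2108.11891 — 3 statements merged into one kernel-verified Lean document; each statement's English description precedes it below -/
import Mathlib

section
/- Let β > 0 and σ > 0. Then the function x ↦ (exp(-β x / (2σ)) - exp(-β x / 2))² / x is integrable on (0, ∞), and ∫₀^∞ (exp(-β x / (2σ)) - exp(-β x / 2))² / x dx ≤ (β² / 4) · (1/σ - 1)² + 2σ/β + 2 exp(-β)/β. In particular, if σ ≥ σ₀ for some σ₀ > 0, this integral is at most (β² / 4) · (1/σ₀² + 1)·2/2 + 2σ/β + 2 exp(-β)/β, a bound affine in σ. -/
/-!
Split `(0, ∞)` at `1`. Near the origin `exp` is `1`-Lipschitz on `(-∞, 0]`, so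
`(exp (-a x) - exp (-b x))² / x ≤ (a - b)² x`, which contributes at most `(a - b)² / 2`.
Beyond `1` the factor `1 / x` is at most `1` and `(p - q)² ≤ 2p² + 2q²` leaves two decaying
exponentials with explicit integrals. The theorem is the case `a = β / (2σ)`, `b = β / 2`.
-/

open Real MeasureTheory Set

lemma abs_exp_neg_sub_exp_neg_le {u v : ℝ} (hu : 0 ≤ u) (hv : 0 ≤ v) :
    |exp (-u) - exp (-v)| ≤ |u - v| := by
  wlog huv : u ≤ v generalizing u v
  · rw [abs_sub_comm, abs_sub_comm u]
    exact this hv hu (le_of_not_ge huv)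
  rw [abs_of_nonneg (sub_nonneg.2 (exp_le_exp.2 (neg_le_neg huv))),
    abs_of_nonpos (sub_nonpos.2 huv)]
  have hsplit : exp (-v) = exp (-u) * exp (u - v) := by rw [← exp_add]; ring_nf
  have hexp_le_one : exp (-u) ≤ 1 := exp_le_one_iff.2 (neg_nonpos.2 hu)
  have hgap : 0 ≤ 1 - exp (u - v) := sub_nonneg.2 (exp_le_one_iff.2 (sub_nonpos.2 huv))
  calc exp (-u) - exp (-v) = exp (-u) * (1 - exp (u - v)) := by rw [hsplit]; ring
    _ ≤ 1 - exp (u - v) := mul_le_of_le_one_left hgap hexp_le_one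
    _ ≤ -(u - v) := by linarith [add_one_le_exp (u - v)]

section

variable {a b : ℝ}

lemma continuousOn_sq_exp_neg_mul_sub_div (a b : ℝ) :
    ContinuousOn (fun x => (exp (-a * x) - exp (-b * x)) ^ 2 / x) (Ioi 0) :=
  (by fun_prop : Continuous fun x => (exp (-a * x) - exp (-b * x)) ^ 2).continuousOn.div
    continuousOn_id fun _ hx => ne_of_gt hx

lemma sq_exp_neg_mul_sub_div_le_mul (ha : 0 ≤ a) (hb : 0 ≤ b) {x : ℝ} (hx : 0 < x) :
    (exp (-a * x) - exp (-b * x)) ^ 2 / x ≤ (a - b) ^ 2 * x := by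
  have hlip := abs_exp_neg_sub_exp_neg_le (mul_nonneg ha hx.le) (mul_nonneg hb hx.le)
  rw [div_le_iff₀ hx]
  calc (exp (-a * x) - exp (-b * x)) ^ 2 ≤ (a * x - b * x) ^ 2 := by
        simpa only [neg_mul] using sq_le_sq.2 hlip
    _ = (a - b) ^ 2 * x * x := by ring

lemma sq_exp_neg_mul_sub_div_le_exp (a b : ℝ) {x : ℝ} (hx : 1 ≤ x) :
    (exp (-a * x) - exp (-b * x)) ^ 2 / x ≤
      2 * exp (-(2 * a) * x) + 2 * exp (-(2 * b) * x) := by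
  have hsq (c : ℝ) : exp (-c * x) ^ 2 = exp (-(2 * c) * x) := by
    rw [← exp_nat_mul]; ring_nf
  calc (exp (-a * x) - exp (-b * x)) ^ 2 / x ≤ (exp (-a * x) - exp (-b * x)) ^ 2 :=
        div_le_self (sq_nonneg _) hx
    _ ≤ 2 * exp (-a * x) ^ 2 + 2 * exp (-b * x) ^ 2 := by
        nlinarith [sq_nonneg (exp (-a * x) + exp (-b * x))]
    _ = 2 * exp (-(2 * a) * x) + 2 * exp (-(2 * b) * x) := by rw [hsq, hsq]

lemma integrableOn_Ioc_sq_exp_neg_mul_sub_div (ha : 0 ≤ a) (hb : 0 ≤ b) :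
    IntegrableOn (fun x => (exp (-a * x) - exp (-b * x)) ^ 2 / x) (Ioc 0 1) := by
  refine Integrable.mono' (g := fun x => (a - b) ^ 2 * x)
    (by fun_prop : Continuous fun x => (a - b) ^ 2 * x).integrableOn_Ioc
    (((continuousOn_sq_exp_neg_mul_sub_div a b).mono Ioc_subset_Ioi_self).aestronglyMeasurable
      measurableSet_Ioc) (ae_restrict_of_forall_mem measurableSet_Ioc fun x hx => ?_)
  rw [norm_of_nonneg (div_nonneg (sq_nonneg _) hx.1.le)]
  exact sq_exp_neg_mul_sub_div_le_mul ha hb hx.1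

lemma integrableOn_Ioi_exp_neg_mul_add (ha : 0 < a) (hb : 0 < b) :
    IntegrableOn (fun x => 2 * exp (-(2 * a) * x) + 2 * exp (-(2 * b) * x)) (Ioi 1) :=
  ((exp_neg_integrableOn_Ioi 1 (by positivity)).const_mul 2).add
    ((exp_neg_integrableOn_Ioi 1 (by positivity)).const_mul 2)

lemma integrableOn_Ioi_one_sq_exp_neg_mul_sub_div (ha : 0 < a) (hb : 0 < b) :
    IntegrableOn (fun x => (exp (-a * x) - exp (-b * x)) ^ 2 / x) (Ioi 1) := by
  refine Integrable.mono' (integrableOn_Ioi_exp_neg_mul_add ha hb)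
    (((continuousOn_sq_exp_neg_mul_sub_div a b).mono
      (Ioi_subset_Ioi zero_le_one)).aestronglyMeasurable measurableSet_Ioi)
    (ae_restrict_of_forall_mem measurableSet_Ioi fun x hx => ?_)
  rw [norm_of_nonneg (div_nonneg (sq_nonneg _) (zero_le_one.trans (le_of_lt hx)))]
  exact sq_exp_neg_mul_sub_div_le_exp a b (le_of_lt hx)

theorem integrableOn_Ioi_sq_exp_neg_mul_sub_div (ha : 0 < a) (hb : 0 < b) :
    IntegrableOn (fun x => (exp (-a * x) - exp (-b * x)) ^ 2 / x) (Ioi 0) := by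
  rw [← Ioc_union_Ioi_eq_Ioi zero_le_one]
  exact (integrableOn_Ioc_sq_exp_neg_mul_sub_div ha.le hb.le).union
    (integrableOn_Ioi_one_sq_exp_neg_mul_sub_div ha hb)

lemma setIntegral_Ioc_sq_exp_neg_mul_sub_div_le (ha : 0 ≤ a) (hb : 0 ≤ b) :
    ∫ x in Ioc 0 1, (exp (-a * x) - exp (-b * x)) ^ 2 / x ≤ (a - b) ^ 2 / 2 := by
  have hlin : ∫ x in Ioc (0 : ℝ) 1, (a - b) ^ 2 * x = (a - b) ^ 2 / 2 := by
    rw [← intervalIntegral.integral_of_le zero_le_one, intervalIntegral.integral_const_mul,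
      integral_id]
    ring
  calc ∫ x in Ioc 0 1, (exp (-a * x) - exp (-b * x)) ^ 2 / x
      ≤ ∫ x in Ioc (0 : ℝ) 1, (a - b) ^ 2 * x :=
        setIntegral_mono_on (integrableOn_Ioc_sq_exp_neg_mul_sub_div ha hb)
          (by fun_prop : Continuous _).integrableOn_Ioc measurableSet_Ioc
          fun x hx => sq_exp_neg_mul_sub_div_le_mul ha hb hx.1
    _ = (a - b) ^ 2 / 2 := hlin

lemma setIntegral_Ioi_one_sq_exp_neg_mul_sub_div_le (ha : 0 < a) (hb : 0 < b) :
    ∫ x in Ioi 1, (exp (-a * x) - exp (-b * x)) ^ 2 / x ≤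
      exp (-(2 * a)) / a + exp (-(2 * b)) / b := by
  have hexp (c : ℝ) (hc : 0 < c) :
      ∫ x in Ioi (1 : ℝ), exp (-(2 * c) * x) = exp (-(2 * c)) / (2 * c) := by
    rw [integral_exp_mul_Ioi (by linarith) 1, mul_one, neg_div_neg_eq]
  calc ∫ x in Ioi 1, (exp (-a * x) - exp (-b * x)) ^ 2 / x
      ≤ ∫ x in Ioi (1 : ℝ), (2 * exp (-(2 * a) * x) + 2 * exp (-(2 * b) * x)) :=
        setIntegral_mono_on (integrableOn_Ioi_one_sq_exp_neg_mul_sub_div ha hb)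
          (integrableOn_Ioi_exp_neg_mul_add ha hb) measurableSet_Ioi
          fun x hx => sq_exp_neg_mul_sub_div_le_exp a b (le_of_lt hx)
    _ = exp (-(2 * a)) / a + exp (-(2 * b)) / b := by
        rw [integral_add ((exp_neg_integrableOn_Ioi 1 (by positivity)).const_mul 2)
          ((exp_neg_integrableOn_Ioi 1 (by positivity)).const_mul 2), integral_const_mul,
          integral_const_mul, hexp a ha, hexp b hb]
        field_simp

theorem setIntegral_Ioi_sq_exp_neg_mul_sub_div_le (ha : 0 < a) (hb : 0 < b) :
    ∫ x in Ioi 0, (exp (-a * x) - exp (-b * x)) ^ 2 / x ≤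
      (a - b) ^ 2 / 2 + exp (-(2 * a)) / a + exp (-(2 * b)) / b := by
  rw [← intervalIntegral.integral_interval_add_Ioi
    (integrableOn_Ioi_sq_exp_neg_mul_sub_div ha hb)
    (integrableOn_Ioi_one_sq_exp_neg_mul_sub_div ha hb),
    intervalIntegral.integral_of_le zero_le_one]
  linarith [setIntegral_Ioc_sq_exp_neg_mul_sub_div_le ha.le hb.le,
    setIntegral_Ioi_one_sq_exp_neg_mul_sub_div_le ha hb]

end

theorem hellinger_full_bound (β σ : ℝ) (hβ : 0 < β) (hσ : 0 < σ) :
    (IntegrableOn (fun x : ℝ => (exp (-β * x / (2 * σ)) - exp (-β * x / 2)) ^ 2 / x)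
        (Set.Ioi 0) ∧
      ∫ x in Set.Ioi (0:ℝ), (exp (-β * x / (2 * σ)) - exp (-β * x / 2)) ^ 2 / x ≤
        β ^ 2 / 4 * (1 / σ - 1) ^ 2 + 2 * σ / β + 2 * exp (-β) / β) ∧
    ∀ σ₀ : ℝ, 0 < σ₀ → σ₀ ≤ σ →
      ∫ x in Set.Ioi (0:ℝ), (exp (-β * x / (2 * σ)) - exp (-β * x / 2)) ^ 2 / x ≤
        β ^ 2 / 4 * (1 / σ₀ ^ 2 + 1) * 2 / 2 + 2 * σ / β + 2 * exp (-β) / β := by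
  have hrate (c x : ℝ) : -β * x / c = -(β / c) * x := by ring
  simp only [hrate]
  have ha : 0 < β / (2 * σ) := by positivity
  have hb : 0 < β / 2 := by positivity
  have hgap : (β / (2 * σ) - β / 2) ^ 2 / 2 ≤ β ^ 2 / 4 * (1 / σ - 1) ^ 2 := by
    have hsq : (β / (2 * σ) - β / 2) ^ 2 = β ^ 2 / 4 * (1 / σ - 1) ^ 2 := by field_simp; ring
    rw [hsq]
    linarith [sq_nonneg (β * (1 / σ - 1))]
  have htail : exp (-(2 * (β / (2 * σ)))) / (β / (2 * σ)) ≤ 2 * σ / β := by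
    rw [div_le_iff₀ ha]
    calc exp (-(2 * (β / (2 * σ)))) ≤ 1 := exp_le_one_iff.2 (by linarith)
      _ = 2 * σ / β * (β / (2 * σ)) := by field_simp
  have hcore : exp (-(2 * (β / 2))) / (β / 2) = 2 * exp (-β) / β := by field_simp
  have hbound : ∫ x in Ioi 0, (exp (-(β / (2 * σ)) * x) - exp (-(β / 2) * x)) ^ 2 / x ≤
      β ^ 2 / 4 * (1 / σ - 1) ^ 2 + 2 * σ / β + 2 * exp (-β) / β := by
    linarith [setIntegral_Ioi_sq_exp_neg_mul_sub_div_le ha hb]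
  refine ⟨⟨integrableOn_Ioi_sq_exp_neg_mul_sub_div ha hb, hbound⟩,
    fun σ₀ hσ₀ hσ₀σ => hbound.trans ?_⟩
  have hsq : (1 / σ - 1) ^ 2 ≤ 1 / σ₀ ^ 2 + 1 := by
    rw [← one_div_pow]
    nlinarith [one_div_pos.2 hσ, one_div_le_one_div_of_le hσ₀ hσ₀σ]
  linarith [mul_le_mul_of_nonneg_left hsq (by positivity : 0 ≤ β ^ 2 / 4)]
end

section
/- Let α > 0, β > 0 and σ > 0. Then the function x ↦ |exp(-β x (1/σ - 1)) - 1| · (α/x) · exp(-β x) is integrable on (0, ∞), and ∫₀^∞ |exp(-β x (1/σ - 1)) - 1| · (α/x) · exp(-β x) dx ≤ α β |1/σ - 1| + α ((σ/β) exp(-β/σ) + (1/β) exp(-β)). -/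
/-!
Writing `a = β / σ`, the integrand is `α |e^{-a x} - e^{-β x}| / x`. Since `t ↦ e^{-t}` is
1-Lipschitz on `[0, ∞)`, this is at most `α |a - β|` for every `x > 0`, which pays for `(0, 1]`;
on `(1, ∞)` it is at most `α (e^{-a x} + e^{-β x})`, whose integral is explicit.
-/

open Real MeasureTheory Set

lemma integral_exp_neg_mul_Ioi {b : ℝ} (hb : 0 < b) (c : ℝ) :
    ∫ x in Ioi c, exp (-b * x) = exp (-b * c) / b := by
  rw [integral_exp_mul_Ioi (neg_lt_zero.mpr hb), neg_div_neg_eq]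

lemma exp_neg_sub_exp_neg_le_sub {u v : ℝ} (hu : 0 ≤ u) (huv : u ≤ v) :
    exp (-u) - exp (-v) ≤ v - u := by
  have hexp_le_one : exp (-u) ≤ 1 := exp_le_one_iff.mpr (neg_nonpos.mpr hu)
  have hsplit : exp (-v) = exp (-u) * exp (-(v - u)) := by rw [← exp_add]; ring_nf
  have htangent : 1 - (v - u) ≤ exp (-(v - u)) := by linarith [add_one_le_exp (-(v - u))]
  calc exp (-u) - exp (-v) ≤ exp (-u) - exp (-u) * (1 - (v - u)) := by
        rw [hsplit]; gcongr
    _ = exp (-u) * (v - u) := by ring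
    _ ≤ v - u := mul_le_of_le_one_left (sub_nonneg.mpr huv) hexp_le_one

section SplitAtPoint

variable {f g : ℝ → ℝ} {a b C : ℝ}

lemma integrableOn_Ioi_of_norm_le_of_norm_le (hab : a ≤ b)
    (hf : AEStronglyMeasurable f (volume.restrict (Ioi a))) (hC : ∀ x ∈ Ioc a b, ‖f x‖ ≤ C)
    (hg : IntegrableOn g (Ioi b)) (hfg : ∀ x ∈ Ioi b, ‖f x‖ ≤ g x) :
    IntegrableOn f (Ioi a) := by
  rw [← Ioc_union_Ioi_eq_Ioi hab]
  refine IntegrableOn.union ?_ ?_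
  · refine Integrable.mono' (integrable_const C) (hf.mono_set Ioc_subset_Ioi_self) ?_
    exact (ae_restrict_iff' measurableSet_Ioc).mpr (Filter.Eventually.of_forall hC)
  · refine Integrable.mono' hg (hf.mono_set (Ioi_subset_Ioi hab)) ?_
    exact (ae_restrict_iff' measurableSet_Ioi).mpr (Filter.Eventually.of_forall hfg)

lemma setIntegral_Ioi_le_of_norm_le_of_norm_le (hab : a ≤ b)
    (hf : AEStronglyMeasurable f (volume.restrict (Ioi a))) (hC : ∀ x ∈ Ioc a b, ‖f x‖ ≤ C)
    (hg : IntegrableOn g (Ioi b)) (hfg : ∀ x ∈ Ioi b, ‖f x‖ ≤ g x) :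
    ∫ x in Ioi a, f x ≤ C * (b - a) + ∫ x in Ioi b, g x := by
  have hint := integrableOn_Ioi_of_norm_le_of_norm_le hab hf hC hg hfg
  have hint_left : IntegrableOn f (Ioc a b) := hint.mono_set Ioc_subset_Ioi_self
  have hint_right : IntegrableOn f (Ioi b) := hint.mono_set (Ioi_subset_Ioi hab)
  rw [← Ioc_union_Ioi_eq_Ioi hab,
    setIntegral_union (Ioc_disjoint_Ioi le_rfl) measurableSet_Ioi hint_left hint_right]
  refine add_le_add ?_ ?_
  · calc ∫ x in Ioc a b, f x ≤ ∫ _ in Ioc a b, C :=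
          setIntegral_mono_on hint_left (integrable_const C) measurableSet_Ioc
            fun x hx => (le_abs_self _).trans (hC x hx)
      _ = C * (b - a) := by rw [setIntegral_const, volume_real_Ioc_of_le hab, smul_eq_mul, mul_comm]
  · exact setIntegral_mono_on hint_right hg measurableSet_Ioi
      fun x hx => (le_abs_self _).trans (hfg x hx)

end SplitAtPoint

section ExpDifferenceQuotient

variable {a b : ℝ}

lemma abs_exp_neg_mul_sub_exp_neg_mul_div_le (ha : 0 ≤ a) (hb : 0 ≤ b) {x : ℝ} (hx : 0 < x) :
    |exp (-a * x) - exp (-b * x)| / x ≤ |a - b| := by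
  rw [div_le_iff₀ hx]
  calc |exp (-a * x) - exp (-b * x)| = |exp (-(a * x)) - exp (-(b * x))| := by ring_nf
    _ ≤ |a * x - b * x| := abs_exp_neg_sub_exp_neg_le (by positivity) (by positivity)
    _ = |a - b| * x := by rw [← sub_mul, abs_mul, abs_of_pos hx]

lemma abs_exp_neg_mul_sub_exp_neg_mul_div_le_add {x : ℝ} (hx : 1 ≤ x) :
    |exp (-a * x) - exp (-b * x)| / x ≤ exp (-a * x) + exp (-b * x) := by
  calc |exp (-a * x) - exp (-b * x)| / x ≤ |exp (-a * x) - exp (-b * x)| :=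
        div_le_self (abs_nonneg _) hx
    _ ≤ |exp (-a * x)| + |exp (-b * x)| := abs_sub _ _
    _ = exp (-a * x) + exp (-b * x) := by rw [abs_of_pos (exp_pos _), abs_of_pos (exp_pos _)]

lemma integrableOn_exp_neg_mul_add_exp_neg_mul_Ioi (ha : 0 < a) (hb : 0 < b) (c : ℝ) :
    IntegrableOn (fun x => exp (-a * x) + exp (-b * x)) (Ioi c) :=
  (exp_neg_integrableOn_Ioi c ha).add (exp_neg_integrableOn_Ioi c hb)

lemma norm_abs_exp_neg_mul_sub_exp_neg_mul_div_le (ha : 0 ≤ a) (hb : 0 ≤ b) :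
    ∀ x ∈ Ioc (0 : ℝ) 1, ‖|exp (-a * x) - exp (-b * x)| / x‖ ≤ |a - b| := fun x hx => by
  rw [norm_of_nonneg (div_nonneg (abs_nonneg _) hx.1.le)]
  exact abs_exp_neg_mul_sub_exp_neg_mul_div_le ha hb hx.1

lemma norm_abs_exp_neg_mul_sub_exp_neg_mul_div_le_add :
    ∀ x ∈ Ioi (1 : ℝ), ‖|exp (-a * x) - exp (-b * x)| / x‖ ≤ exp (-a * x) + exp (-b * x) :=
  fun x hx => by
    rw [norm_of_nonneg (div_nonneg (abs_nonneg _) (zero_le_one.trans (le_of_lt hx)))]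
    exact abs_exp_neg_mul_sub_exp_neg_mul_div_le_add (le_of_lt hx)

lemma integrableOn_abs_exp_neg_mul_sub_exp_neg_mul_div (ha : 0 < a) (hb : 0 < b) :
    IntegrableOn (fun x => |exp (-a * x) - exp (-b * x)| / x) (Ioi 0) :=
  integrableOn_Ioi_of_norm_le_of_norm_le zero_le_one
    (Measurable.aestronglyMeasurable (by fun_prop))
    (norm_abs_exp_neg_mul_sub_exp_neg_mul_div_le ha.le hb.le)
    (integrableOn_exp_neg_mul_add_exp_neg_mul_Ioi ha hb 1)
    norm_abs_exp_neg_mul_sub_exp_neg_mul_div_le_add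

lemma integral_abs_exp_neg_mul_sub_exp_neg_mul_div_le (ha : 0 < a) (hb : 0 < b) :
    ∫ x in Ioi 0, |exp (-a * x) - exp (-b * x)| / x ≤ |a - b| + exp (-a) / a + exp (-b) / b := by
  have hsplit := setIntegral_Ioi_le_of_norm_le_of_norm_le zero_le_one
    (Measurable.aestronglyMeasurable (by fun_prop))
    (norm_abs_exp_neg_mul_sub_exp_neg_mul_div_le ha.le hb.le)
    (integrableOn_exp_neg_mul_add_exp_neg_mul_Ioi ha hb 1)
    norm_abs_exp_neg_mul_sub_exp_neg_mul_div_le_add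
  rwa [integral_add (exp_neg_integrableOn_Ioi 1 ha) (exp_neg_integrableOn_Ioi 1 hb),
    integral_exp_neg_mul_Ioi ha, integral_exp_neg_mul_Ioi hb, sub_zero, mul_one, mul_one, mul_one,
    ← add_assoc] at hsplit

end ExpDifferenceQuotient

theorem total_variation_integrand_bound (α β σ : ℝ) (hα : 0 < α) (hβ : 0 < β) (hσ : 0 < σ) :
    IntegrableOn
        (fun x : ℝ => |exp (-β * x * (1 / σ - 1)) - 1| * (α / x) * exp (-β * x))
        (Set.Ioi 0) ∧
      ∫ x in Set.Ioi (0:ℝ), |exp (-β * x * (1 / σ - 1)) - 1| * (α / x) * exp (-β * x) ≤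
        α * β * |1 / σ - 1| + α * (σ / β * exp (-β / σ) + 1 / β * exp (-β)) := by
  have hβσ : 0 < β / σ := div_pos hβ hσ
  have hintegrand : (fun x : ℝ => |exp (-β * x * (1 / σ - 1)) - 1| * (α / x) * exp (-β * x)) =
      fun x => α * (|exp (-(β / σ) * x) - exp (-β * x)| / x) := by
    funext x
    have hprod : exp (-β * x * (1 / σ - 1)) * exp (-β * x) = exp (-(β / σ) * x) := by
      rw [← exp_add]; congr 1; field_simp; ring
    rw [← hprod, ← sub_one_mul, abs_mul, abs_of_pos (exp_pos _)]
    ring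
  rw [hintegrand]
  refine ⟨(integrableOn_abs_exp_neg_mul_sub_exp_neg_mul_div hβσ hβ).const_mul α, ?_⟩
  rw [integral_const_mul]
  calc α * ∫ x in Ioi 0, |exp (-(β / σ) * x) - exp (-β * x)| / x
      ≤ α * (|β / σ - β| + exp (-(β / σ)) / (β / σ) + exp (-β) / β) :=
        mul_le_mul_of_nonneg_left (integral_abs_exp_neg_mul_sub_exp_neg_mul_div_le hβσ hβ) hα.le
    _ = α * β * |1 / σ - 1| + α * (σ / β * exp (-β / σ) + 1 / β * exp (-β)) := by
        rw [show β / σ - β = β * (1 / σ - 1) by ring, abs_mul, abs_of_pos hβ, neg_div]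
        field_simp
        ring
end

section
/- Let α > 0, β > 0 and σ > 0, and define y(σ, z) = exp(-β z (1/σ - 1)) for z > 0. Then the function z ↦ (y(σ,z) log y(σ,z) - y(σ,z) + 1) · (α/z) · exp(-β z) is integrable on (0, ∞), and ∫₀^∞ (y(σ,z) log y(σ,z) - y(σ,z) + 1) · (α/z) · exp(-β z) dz = α (σ - 1 - log σ). -/
open Real MeasureTheory Set Filter Topology

/-!
Since `log y` is linear in `z` and `y · v(z) = (α / z) exp (-(β / σ) z)`, the integrand equals
`α β (1 - σ⁻¹) exp (-(β / σ) z) + α z⁻¹ (exp (-β z) - exp (-(β / σ) z))`. The first term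
integrates to `α (σ - 1)`; the second is a Frullani integral, equal to `α log (1 / σ)`. Its
integrability comes from `0 ≤ exp (-a z) - exp (-b z) ≤ (b - a) z exp (-a z)` for `a ≤ b`,
a consequence of `1 - t ≤ exp (-t)`.
-/

lemma exp_neg_mul_sub_exp_neg_mul_le (a b x : ℝ) :
    exp (-(a * x)) - exp (-(b * x)) ≤ (b - a) * x * exp (-(a * x)) := by
  have hsplit : exp (-(b * x)) = exp (-(a * x)) * exp (-((b - a) * x)) := by
    rw [← exp_add]; ring_nf
  have hlin : -((b - a) * x) + 1 ≤ exp (-((b - a) * x)) := add_one_le_exp _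
  rw [hsplit]
  nlinarith [exp_pos (-(a * x))]

lemma integrableOn_Ioi_inv_mul_exp_neg_sub_of_le {a b : ℝ} (ha : 0 < a) (hab : a ≤ b) :
    IntegrableOn (fun x ↦ x⁻¹ * (exp (-(a * x)) - exp (-(b * x)))) (Ioi 0) := by
  refine Integrable.mono' ((integrableOn_exp_mul_Ioi (neg_neg_of_pos ha) 0).const_mul (b - a))
    (by fun_prop) ((ae_restrict_iff' measurableSet_Ioi).2 (Eventually.of_forall fun x hx ↦ ?_))
  have hx : 0 < x := hx
  have hnonneg : 0 ≤ exp (-(a * x)) - exp (-(b * x)) :=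
    sub_nonneg.2 (exp_le_exp.2 (by nlinarith))
  rw [norm_of_nonneg (by positivity), inv_mul_le_iff₀ hx, neg_mul]
  linarith [exp_neg_mul_sub_exp_neg_mul_le a b x]

lemma integrableOn_Ioi_inv_mul_exp_neg_sub {a b : ℝ} (ha : 0 < a) (hb : 0 < b) :
    IntegrableOn (fun x ↦ x⁻¹ * (exp (-(a * x)) - exp (-(b * x)))) (Ioi 0) := by
  rcases le_total a b with hab | hba
  · exact integrableOn_Ioi_inv_mul_exp_neg_sub_of_le ha hab
  · refine (integrableOn_Ioi_inv_mul_exp_neg_sub_of_le hb hba).neg.congr_fun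
      (fun x _ ↦ ?_) measurableSet_Ioi
    simp only [Pi.neg_apply]
    ring

lemma integral_Ioi_inv_mul_exp_neg_sub {a b : ℝ} (ha : 0 < a) (hb : 0 < b) :
    ∫ x in Ioi 0, x⁻¹ * (exp (-(a * x)) - exp (-(b * x))) = log (b / a) := by
  have hcont : Continuous fun x : ℝ ↦ exp (-x) := by fun_prop
  simpa using Frullani.integral_Ioi_eq (hcont.locallyIntegrable.locallyIntegrableOn _) ha hb
    ((hcont.tendsto' 0 1 (by simp)).mono_left nhdsWithin_le_nhds)
    tendsto_exp_neg_atTop_nhds_zero (integrableOn_Ioi_inv_mul_exp_neg_sub ha hb)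

lemma lepingle_memin_integrand_eq (α β σ : ℝ) {z : ℝ} (hz : z ≠ 0) :
    (exp (-β * z * (1 / σ - 1)) * Real.log (exp (-β * z * (1 / σ - 1)))
        - exp (-β * z * (1 / σ - 1)) + 1) * (α / z) * exp (-β * z) =
      α * (β * (1 - σ⁻¹) * exp (-(β / σ) * z) +
        z⁻¹ * (exp (-(β * z)) - exp (-(β / σ * z)))) := by
  have hprod : exp (-(β * z * (1 / σ - 1))) * exp (-(β * z)) = exp (-(β / σ * z)) := by
    rw [← exp_add]; ring_nf
  simp only [neg_mul, log_exp]
  linear_combination (α * z⁻¹ * (-(β * z * (1 / σ - 1)) - 1)) * hprod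
    + α * β * (1 - σ⁻¹) * exp (-(β / σ * z)) * mul_inv_cancel₀ hz

theorem lepingle_memin_integrand_general (α β σ : ℝ) (hβ : 0 < β) (hσ : 0 < σ) :
    IntegrableOn
        (fun z : ℝ =>
          (exp (-β * z * (1 / σ - 1)) * Real.log (exp (-β * z * (1 / σ - 1)))
            - exp (-β * z * (1 / σ - 1)) + 1) * (α / z) * exp (-β * z))
        (Set.Ioi 0) ∧
      ∫ z in Set.Ioi (0:ℝ),
          (exp (-β * z * (1 / σ - 1)) * Real.log (exp (-β * z * (1 / σ - 1)))
            - exp (-β * z * (1 / σ - 1)) + 1) * (α / z) * exp (-β * z) =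
        α * (σ - 1 - Real.log σ) := by
  have hr : 0 < β / σ := div_pos hβ hσ
  have hEq := fun z (hz : z ∈ Ioi (0 : ℝ)) ↦ lepingle_memin_integrand_eq α β σ (ne_of_gt hz)
  have hexp := (integrableOn_exp_mul_Ioi (neg_neg_of_pos hr) 0).const_mul (β * (1 - σ⁻¹))
  have hfr := integrableOn_Ioi_inv_mul_exp_neg_sub hβ hr
  refine ⟨IntegrableOn.congr_fun ((hexp.add hfr).const_mul α) (fun z hz ↦ (hEq z hz).symm)
    measurableSet_Ioi, ?_⟩
  rw [setIntegral_congr_fun measurableSet_Ioi hEq, integral_const_mul, integral_add hexp hfr,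
    integral_const_mul, integral_exp_mul_Ioi (neg_neg_of_pos hr),
    integral_Ioi_inv_mul_exp_neg_sub hβ hr, div_div_cancel_left' hβ.ne', log_inv,
    mul_zero, exp_zero]
  field_simp
  ring

theorem lepingle_memin_integrand (α β σ : ℝ) (hα : 0 < α) (hβ : 0 < β) (hσ : 0 < σ) :
    IntegrableOn
        (fun z : ℝ =>
          (exp (-β * z * (1 / σ - 1)) * Real.log (exp (-β * z * (1 / σ - 1)))
            - exp (-β * z * (1 / σ - 1)) + 1) * (α / z) * exp (-β * z))
        (Set.Ioi 0) ∧
      ∫ z in Set.Ioi (0:ℝ),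
          (exp (-β * z * (1 / σ - 1)) * Real.log (exp (-β * z * (1 / σ - 1)))
            - exp (-β * z * (1 / σ - 1)) + 1) * (α / z) * exp (-β * z) =
        α * (σ - 1 - Real.log σ) :=
  lepingle_memin_integrand_general α β σ hβ hσ
end
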